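/- arXiv:2207.08717 — 4 statements merged into one kernel-verified Lean document; each statement's English description precedes it below -/
import Mathlib

section
/- Let X be a Banach space, Z ⊆ X a subspace, and Y a normed space. Suppose for some 0 < ε < 1: ‖z + y'‖ ≥ (2 − ε) for all z ∈ S_Z and all y' in the image under T of S_Y, where T : Y → X satisfies ‖T‖ ≤ 1. Then for all nonzero z ∈ Z and nonzero y ∈ Y, ‖z + T(y)‖ ≥ (1−ε)²(‖z‖ + ‖y‖). -/
/-! Normalise `z = ‖z‖ • z₁` and `T y = ‖y‖ • w` with `‖z₁‖ = 1`, `‖w‖ ≤ 1`. Writing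
`z + T y = a • (z₁ + w) + (b - a) • w` (or symmetrically around `b`) gives
`‖z + T y‖ ≥ max a b * ‖z₁ + w‖ - |a - b| ≥ a + b - ε * max a b`, which dominates
`(1 - ε)² (a + b)`. -/

section

variable {E : Type*} [NormedAddCommGroup E] [NormedSpace ℝ E]

theorem mul_norm_add_sub_le_norm_smul_add_smul (a b : ℝ) (u v : E) :
    a * ‖u + v‖ - |a - b| * ‖v‖ ≤ ‖a • u + b • v‖ := by
  have hsplit : a • u + b • v = a • (u + v) + (b - a) • v := by module
  have htri := norm_sub_le_norm_add (a • (u + v)) ((b - a) • v)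
  rw [← hsplit, norm_smul, norm_smul, Real.norm_eq_abs, Real.norm_eq_abs, abs_sub_comm] at htri
  nlinarith [le_abs_self a, norm_nonneg (u + v)]

theorem max_mul_norm_add_sub_le_norm_smul_add_smul {u v : E} (hu : ‖u‖ ≤ 1) (hv : ‖v‖ ≤ 1)
    (a b : ℝ) : max a b * ‖u + v‖ - |a - b| ≤ ‖a • u + b • v‖ := by
  have hab := mul_norm_add_sub_le_norm_smul_add_smul a b u v
  have hba := mul_norm_add_sub_le_norm_smul_add_smul b a v u
  rw [add_comm v, add_comm (b • v), abs_sub_comm] at hba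
  have hv' := mul_le_mul_of_nonneg_left hv (abs_nonneg (a - b))
  have hu' := mul_le_mul_of_nonneg_left hu (abs_nonneg (a - b))
  rcases le_total a b with h | h
  · rw [max_eq_right h]; linarith
  · rw [max_eq_left h]; linarith

end

theorem sq_one_sub_mul_add_le_max_mul_sub_abs {a b ε s : ℝ} (ha : 0 ≤ a) (hb : 0 ≤ b)
    (hε0 : 0 ≤ ε) (hε1 : ε ≤ 1) (hs : 2 - ε ≤ s) :
    (1 - ε) ^ 2 * (a + b) ≤ max a b * s - |a - b| := by
  rcases le_total a b with h | h
  · rw [max_eq_right h, abs_of_nonpos (by linarith)]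
    nlinarith [mul_le_mul_of_nonneg_left hs hb, mul_nonneg (mul_nonneg hε0 (sub_nonneg.2 hε1)) ha,
      mul_nonneg (mul_nonneg hε0 (sub_nonneg.2 hε1)) hb, mul_nonneg hε0 ha]
  · rw [max_eq_left h, abs_of_nonneg (by linarith)]
    nlinarith [mul_le_mul_of_nonneg_left hs ha, mul_nonneg (mul_nonneg hε0 (sub_nonneg.2 hε1)) ha,
      mul_nonneg (mul_nonneg hε0 (sub_nonneg.2 hε1)) hb, mul_nonneg hε0 hb]

theorem stmt2_general {X Y : Type*} [NormedAddCommGroup X] [NormedSpace ℝ X]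
    [NormedAddCommGroup Y] [NormedSpace ℝ Y]
    (Z : Submodule ℝ X) (T : Y →L[ℝ] X) (hT : ‖T‖ ≤ 1)
    (ε : ℝ) (hε1 : ε < 1)
    (h : ∀ z ∈ Z, ‖z‖ = 1 → ∀ y : Y, ‖y‖ = 1 → 2 - ε ≤ ‖z + T y‖) :
    ∀ z ∈ Z, z ≠ 0 → ∀ y : Y, y ≠ 0 →
      (1 - ε) ^ 2 * (‖z‖ + ‖y‖) ≤ ‖z + T y‖ := by
  intro z hz hz0 y hy0
  set z₁ := ‖z‖⁻¹ • z
  set y₁ := ‖y‖⁻¹ • y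
  have hz₁ : ‖z₁‖ = 1 := norm_smul_inv_norm hz0
  have hy₁ : ‖y₁‖ = 1 := norm_smul_inv_norm hy0
  have hw : ‖T y₁‖ ≤ 1 := by simpa [hy₁] using T.le_of_opNorm_le hT y₁
  have hkey : 2 - ε ≤ ‖z₁ + T y₁‖ := h z₁ (Z.smul_mem _ hz) hz₁ y₁ hy₁
  have hε0 : 0 ≤ ε := by linarith [norm_add_le z₁ (T y₁)]
  have hzy : z + T y = ‖z‖ • z₁ + ‖y‖ • T y₁ := by
    rw [map_smul, smul_inv_smul₀ (norm_ne_zero_iff.2 hz0), smul_inv_smul₀ (norm_ne_zero_iff.2 hy0)]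
  rw [hzy]
  exact (sq_one_sub_mul_add_le_max_mul_sub_abs (norm_nonneg z) (norm_nonneg y) hε0 hε1.le hkey).trans
    (max_mul_norm_add_sub_le_norm_smul_add_smul hz₁.le hw _ _)

/-- Homogeneity argument: from `‖z + T y‖ ≥ 2 - ε` for unit vectors `z ∈ Z`, `y ∈ Y`
(with `‖T‖ ≤ 1`) one deduces `‖z + T y‖ ≥ (1-ε)² (‖z‖ + ‖y‖)` for all nonzero
`z ∈ Z`, `y ∈ Y`. -/
theorem stmt2 {X Y : Type*} [NormedAddCommGroup X] [NormedSpace ℝ X] [CompleteSpace X]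
    [NormedAddCommGroup Y] [NormedSpace ℝ Y]
    (Z : Submodule ℝ X) (T : Y →L[ℝ] X) (hT : ‖T‖ ≤ 1)
    (ε : ℝ) (hε0 : 0 < ε) (hε1 : ε < 1)
    (h : ∀ z ∈ Z, ‖z‖ = 1 → ∀ y : Y, ‖y‖ = 1 → 2 - ε ≤ ‖z + T y‖) :
    ∀ z ∈ Z, z ≠ 0 → ∀ y : Y, y ≠ 0 →
      (1 - ε) ^ 2 * (‖z‖ + ‖y‖) ≤ ‖z + T y‖ :=
  stmt2_general Z T hT ε hε1 h
end

section
/- Let X be a Banach space such that for every ε > 0, every finite-dimensional subspace Z ⊆ X, and every n ∈ ℕ there is T : ℓ_∞ⁿ → X with ‖T‖ ≤ 1 and ‖z + T(y)‖ ≥ (1−ε)(‖z‖ + ‖y‖) for all z ∈ Z, y ∈ ℓ_∞ⁿ. Then for every Banach space Y and every subspace H ⊆ L(Y,X) containing the finite-rank operators, the norm of H is octahedral; in particular L(Y,X) is octahedral for every nonzero Y. -/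
open scoped ENNReal

/-- A norm is octahedral if for every finite-dimensional subspace `E` and every `ε > 0`
there is a unit vector `u` with `‖x + λ • u‖ ≥ (1-ε)(‖x‖ + |λ|)` for `x ∈ E`, `λ ∈ ℝ`. -/
def Octahedral (X : Type*) [NormedAddCommGroup X] [NormedSpace ℝ X] : Prop :=
  ∀ E : Submodule ℝ X, FiniteDimensional ℝ E → ∀ ε : ℝ, 0 < ε →
    ∃ u : X, ‖u‖ = 1 ∧ ∀ x ∈ E, ∀ l : ℝ, (1 - ε) * (‖x‖ + |l|) ≤ ‖x + l • u‖

/-! Given a finite-dimensional `E ⊆ L(Y, X)`, compactness of its unit sphere yields unit vectors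
`y₁, …, yₙ` of `Y` such that every `S ∈ E` almost attains its norm at some `yᵢ`. Norming
functionals of the `yᵢ` form `V : Y → ℓ∞ⁿ` with `‖V‖ ≤ 1` and `‖V yᵢ‖ = 1`. The hypothesis,
applied to the span `Z` of all `S yᵢ`, gives `T : ℓ∞ⁿ → X`, and `Ψ = T ∘ V` is a finite-rank
operator with `‖S + λ Ψ‖ ≥ ‖S yᵢ + T (λ V yᵢ)‖ ≥ (1 - δ) (‖S yᵢ‖ + |λ|)`; normalising `Ψ`
costs only another factor `1 - δ`. -/

open Metric

theorem exists_norming_map_piLp_top {𝕜 ι Y : Type*} [RCLike 𝕜] [Fintype ι]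
    [NormedAddCommGroup Y] [NormedSpace 𝕜 Y] (y : ι → Y) (hy : ∀ i, ‖y i‖ = 1) :
    ∃ V : Y →L[𝕜] PiLp ⊤ (fun _ : ι => 𝕜), ‖V‖ ≤ 1 ∧ ∀ i, ‖V (y i)‖ = 1 := by
  choose f hf using fun i => exists_dual_vector 𝕜 (y i) (by simp [hy i])
  let V : Y →L[𝕜] PiLp ⊤ (fun _ : ι => 𝕜) :=
    (PiLp.continuousLinearEquiv ⊤ 𝕜 _).symm.toContinuousLinearMap.comp
      (ContinuousLinearMap.pi f)
  have hV : ∀ x, ‖V x‖ ≤ ‖x‖ := fun x => by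
    simpa [V] using (pi_norm_le_iff_of_nonneg (norm_nonneg x)).mpr fun i =>
      ((f i).le_opNorm x).trans_eq (by rw [(hf i).1, one_mul])
  refine ⟨V, V.opNorm_le_bound zero_le_one fun x => by simpa using hV x, fun i => ?_⟩
  refine le_antisymm ((hV _).trans_eq (hy i)) ?_
  calc (1 : ℝ) = ‖f i (y i)‖ := by simp [(hf i).2, hy i]
    _ ≤ ‖V (y i)‖ := PiLp.norm_apply_le (V (y i)) i

theorem le_norm_add_smul_inv_norm_smul {W : Type*} [NormedAddCommGroup W] [NormedSpace ℝ W]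
    {x v : W} {c : ℝ} (hc : 0 ≤ c) (hc1 : c ≤ 1) (hv : v ≠ 0) (hv1 : ‖v‖ ≤ 1)
    (h : ∀ m : ℝ, c * (c * ‖x‖ + |m|) ≤ ‖x + m • v‖) (l : ℝ) :
    c ^ 2 * (‖x‖ + |l|) ≤ ‖x + l • (‖v‖⁻¹ • v)‖ := by
  have hinv : 1 ≤ ‖v‖⁻¹ := one_le_inv₀ (norm_pos_iff.mpr hv) |>.mpr hv1
  rw [smul_smul]
  refine le_trans ?_ (h _)
  rw [abs_mul, abs_of_pos (inv_pos.mpr (norm_pos_iff.mpr hv))]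
  have hl : c * |l| ≤ |l| * ‖v‖⁻¹ :=
    calc c * |l| ≤ 1 * |l| := by gcongr
      _ ≤ ‖v‖⁻¹ * |l| := by gcongr
      _ = |l| * ‖v‖⁻¹ := mul_comm _ _
  nlinarith [mul_le_mul_of_nonneg_left hl hc]

section Operators

variable {Y X : Type*} [NormedAddCommGroup Y] [NormedSpace ℝ Y]
  [NormedAddCommGroup X] [NormedSpace ℝ X]

theorem exists_finite_norming_family [Nontrivial Y] (E : Submodule ℝ (Y →L[ℝ] X))
    [FiniteDimensional ℝ E] {c : ℝ} (hc : c < 1) :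
    ∃ (n : ℕ) (y : Fin (n + 1) → Y), (∀ i, ‖y i‖ = 1) ∧
      ∀ S ∈ E, ∃ i, c * ‖S‖ ≤ ‖S (y i)‖ := by
  let K : Set (Y →L[ℝ] X) := (↑) '' sphere (0 : E) 1
  have hK : IsCompact K := (isCompact_sphere 0 1).image continuous_subtype_val
  have hcover : K ⊆ ⋃ y : sphere (0 : Y) 1, {R | c < ‖R y‖} := by
    rintro _ ⟨S, hS, rfl⟩
    have hS1 : ‖(S : Y →L[ℝ] X)‖₊ = 1 := by
      ext; simpa using hS
    obtain ⟨y, hy, hSy⟩ := (S : Y →L[ℝ] X).exists_nnnorm_eq_one_lt_apply_of_lt_opNNNorm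
      (r := c.toNNReal) (hS1 ▸ Real.toNNReal_lt_one.mpr hc)
    exact Set.mem_iUnion.mpr ⟨⟨y, by simpa using congrArg NNReal.toReal hy⟩,
      (Real.le_coe_toNNReal c).trans_lt hSy⟩
  obtain ⟨t, ht⟩ := hK.elim_finite_subcover _ (fun y : sphere (0 : Y) 1 => isOpen_lt
    continuous_const (continuous_norm.comp (ContinuousLinearMap.apply ℝ X (y : Y)).continuous))
    hcover
  -- the extra vector `y₀` keeps the family nonempty when `E = 0`
  obtain ⟨y₀, hy₀⟩ := (NormedSpace.sphere_nonempty (x := (0 : Y))).mpr zero_le_one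
  refine ⟨t.card, Fin.cons y₀ fun i => t.equivFin.symm i, fun i => ?_, fun S hS => ?_⟩
  · refine Fin.cases ?_ (fun i => ?_) i
    · simpa using hy₀
    · simp
  rcases eq_or_ne S 0 with rfl | hS0
  · exact ⟨0, by simp⟩
  have hSK : ‖S‖⁻¹ • S ∈ K :=
    ⟨⟨‖S‖⁻¹ • S, E.smul_mem _ hS⟩, by simp [norm_smul, hS0], rfl⟩
  obtain ⟨y, hyt, hy⟩ := Set.mem_iUnion₂.mp (ht hSK)
  refine ⟨(t.equivFin ⟨y, hyt⟩).succ, ?_⟩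
  have hy' : c < ‖S‖⁻¹ * ‖S y‖ := by simpa [norm_smul] using hy
  simpa [mul_comm] using ((lt_inv_mul_iff₀ (norm_pos_iff.mpr hS0)).mp hy').le

theorem le_norm_add_smul_comp {F : Type*} [NormedAddCommGroup F] [NormedSpace ℝ F]
    {S : Y →L[ℝ] X} {T : F →L[ℝ] X} {V : Y →L[ℝ] F} {y : Y} {c : ℝ} (hc : 0 ≤ c)
    (hy : ‖y‖ ≤ 1) (hSy : c * ‖S‖ ≤ ‖S y‖) (hVy : 1 ≤ ‖V y‖)
    (hT : ∀ w, c * (‖S y‖ + ‖w‖) ≤ ‖S y + T w‖) (m : ℝ) :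
    c * (c * ‖S‖ + |m|) ≤ ‖S + m • T.comp V‖ :=
  calc c * (c * ‖S‖ + |m|) ≤ c * (‖S y‖ + ‖m • V y‖) := by
        gcongr
        rw [norm_smul, Real.norm_eq_abs]
        exact le_mul_of_one_le_right (abs_nonneg m) hVy
    _ ≤ ‖S y + T (m • V y)‖ := hT _
    _ = ‖(S + m • T.comp V) y‖ := by simp
    _ ≤ ‖S + m • T.comp V‖ := (S + m • T.comp V).unit_le_opNorm y hy

theorem exists_finiteRank_octahedral_witness [Nontrivial Y]
    (h : ∀ ε : ℝ, 0 < ε → ∀ Z : Submodule ℝ X, FiniteDimensional ℝ Z → ∀ n : ℕ,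
      ∃ T : PiLp ⊤ (fun _ : Fin n => ℝ) →L[ℝ] X, ‖T‖ ≤ 1 ∧
        ∀ z ∈ Z, ∀ y : PiLp ⊤ (fun _ : Fin n => ℝ),
          (1 - ε) * (‖z‖ + ‖y‖) ≤ ‖z + T y‖)
    (E : Submodule ℝ (Y →L[ℝ] X)) [FiniteDimensional ℝ E] {ε : ℝ} (hε : 0 < ε) :
    ∃ Ψ : Y →L[ℝ] X, ‖Ψ‖ = 1 ∧ FiniteDimensional ℝ (LinearMap.range (Ψ : Y →ₗ[ℝ] X)) ∧
      ∀ S ∈ E, ∀ l : ℝ, (1 - ε) * (‖S‖ + |l|) ≤ ‖S + l • Ψ‖ := by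
  -- `(1 - δ) ^ 2 ≥ 1 - ε`, and `1 - δ ≥ 1 / 2`
  set δ := min (ε / 2) (1 / 2)
  have hδ : 0 < δ := lt_min (half_pos hε) one_half_pos
  have hδε : δ ≤ ε / 2 := min_le_left _ _
  have hδ1 : δ ≤ 1 / 2 := min_le_right _ _
  obtain ⟨n, y, hy, hyE⟩ := exists_finite_norming_family E (c := 1 - δ) (by linarith)
  obtain ⟨V, hV, hVy⟩ := exists_norming_map_piLp_top (𝕜 := ℝ) y hy
  let Z : Submodule ℝ X :=
    ⨆ i, E.map (ContinuousLinearMap.apply ℝ X (y i) : (Y →L[ℝ] X) →ₗ[ℝ] X)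
  obtain ⟨T, hT, hTZ⟩ := h δ hδ Z inferInstance (n + 1)
  have key : ∀ S ∈ E, ∀ m : ℝ, (1 - δ) * ((1 - δ) * ‖S‖ + |m|) ≤ ‖S + m • T.comp V‖ := by
    intro S hS m
    obtain ⟨i, hi⟩ := hyE S hS
    exact le_norm_add_smul_comp (by linarith) (hy i).le hi (hVy i).ge
      (hTZ _ (Submodule.mem_iSup_of_mem i (Submodule.mem_map_of_mem hS))) m
  have hne : T.comp V ≠ 0 := by
    intro h0
    have := key 0 E.zero_mem 1
    norm_num [h0] at this
    linarith
  have hle : ‖T.comp V‖ ≤ 1 := (T.opNorm_comp_le V).trans (mul_le_one₀ hT (norm_nonneg V) hV)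
  refine ⟨‖T.comp V‖⁻¹ • T.comp V, norm_smul_inv_norm hne, ?_, fun S hS l => ?_⟩
  · refine Submodule.finiteDimensional_of_le
      (S₂ := LinearMap.range (T : PiLp ⊤ (fun _ : Fin (n + 1) => ℝ) →ₗ[ℝ] X)) ?_
    rintro _ ⟨x, rfl⟩
    exact ⟨‖T.comp V‖⁻¹ • V x, by simp⟩
  calc (1 - ε) * (‖S‖ + |l|) ≤ (1 - δ) ^ 2 * (‖S‖ + |l|) := by
        gcongr
        nlinarith
    _ ≤ ‖S + l • (‖T.comp V‖⁻¹ • T.comp V)‖ :=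
        le_norm_add_smul_inv_norm_smul (by linarith) (by linarith) hne hle (key S hS) l

end Operators

theorem stmt16_general {X : Type*} [NormedAddCommGroup X] [NormedSpace ℝ X]
    (h : ∀ ε : ℝ, 0 < ε → ∀ Z : Submodule ℝ X, FiniteDimensional ℝ Z → ∀ n : ℕ,
      ∃ T : PiLp ⊤ (fun _ : Fin n => ℝ) →L[ℝ] X, ‖T‖ ≤ 1 ∧
        ∀ z ∈ Z, ∀ y : PiLp ⊤ (fun _ : Fin n => ℝ),
          (1 - ε) * (‖z‖ + ‖y‖) ≤ ‖z + T y‖) :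
    ∀ (Y : Type*) [NormedAddCommGroup Y] [NormedSpace ℝ Y] [CompleteSpace Y]
      [Nontrivial Y],
      (∀ H : Submodule ℝ (Y →L[ℝ] X),
        (∀ T : Y →L[ℝ] X, FiniteDimensional ℝ (LinearMap.range (T : Y →ₗ[ℝ] X)) →
          T ∈ H) → Octahedral H) ∧
      Octahedral (Y →L[ℝ] X) := by
  intro Y _ _ _ _
  refine ⟨fun H hH E hE ε hε => ?_, fun E hE ε hε => ?_⟩
  · obtain ⟨Ψ, hΨ1, hΨfin, hΨ⟩ := exists_finiteRank_octahedral_witness h (E.map H.subtype) hε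
    exact ⟨⟨Ψ, hH Ψ hΨfin⟩, hΨ1, fun S hS l => hΨ S ⟨S, hS, rfl⟩ l⟩
  · obtain ⟨Ψ, hΨ1, -, hΨ⟩ := exists_finiteRank_octahedral_witness h E hε
    exact ⟨Ψ, hΨ1, hΨ⟩

/-- If for every `ε > 0`, finite-dimensional `Z ⊆ X` and `n` there is
`T : ℓ_∞ⁿ → X` with `‖T‖ ≤ 1` and `‖z + T y‖ ≥ (1-ε)(‖z‖+‖y‖)`, then for every
(nonzero) Banach space `Y` and every subspace `H ⊆ L(Y,X)` containing the finite-rank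
operators, the norm of `H` is octahedral; in particular `L(Y,X)` is octahedral. -/
theorem stmt16 {X : Type*} [NormedAddCommGroup X] [NormedSpace ℝ X] [CompleteSpace X]
    (h : ∀ ε : ℝ, 0 < ε → ∀ Z : Submodule ℝ X, FiniteDimensional ℝ Z → ∀ n : ℕ,
      ∃ T : PiLp ⊤ (fun _ : Fin n => ℝ) →L[ℝ] X, ‖T‖ ≤ 1 ∧
        ∀ z ∈ Z, ∀ y : PiLp ⊤ (fun _ : Fin n => ℝ),
          (1 - ε) * (‖z‖ + ‖y‖) ≤ ‖z + T y‖) :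
    ∀ (Y : Type*) [NormedAddCommGroup Y] [NormedSpace ℝ Y] [CompleteSpace Y]
      [Nontrivial Y],
      (∀ H : Submodule ℝ (Y →L[ℝ] X),
        (∀ T : Y →L[ℝ] X, FiniteDimensional ℝ (LinearMap.range (T : Y →ₗ[ℝ] X)) →
          T ∈ H) → Octahedral H) ∧
      Octahedral (Y →L[ℝ] X) :=
  stmt16_general h
end

section
/- Let X and Y be Banach spaces with Y finite-dimensional. The following are equivalent: (1) for every finite-dimensional subspace Z of X and every ε > 0 there is a norm-one operator T : Y → X with ‖z + T(y)‖ ≥ (1−ε)(‖z‖ + ‖y‖) for all y ∈ Y, z ∈ Z; (2) for all finite sets {z₁,...,z_n} ⊆ S_X, {y₁,...,y_m} ⊆ S_Y, and every ε > 0 there is a norm-one operator T : Y → X with ‖z_i + T(y_j)‖ > 2 − ε for all i, j. -/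
/-!
(1) ⇒ (2): apply (1) to `Z = span {zᵢ}`.

(2) ⇒ (1): apply (2) to finite `ε/4`-nets of the unit spheres of `Z` and `Y`; since `‖T‖ = 1`,
the bound `‖u + T v‖ > 2 - ε` extends from the nets to all unit vectors `u ∈ Z`, `v ∈ Y`. If two
vectors of the unit ball have a sum of norm at least `2 - ε`, a norming functional of the sum is
at least `1 - ε` on both, so `‖a • u + b • w‖ ≥ (1 - ε) (a + b)` for `a, b ≥ 0`; writing
`z = ‖z‖ • u` and `y = ‖y‖ • v` gives (1). Adding a unit vector to `Z` takes care of `z = 0`.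
-/

theorem IsCompact.exists_finset_forall_exists_dist_lt {α : Type*} [PseudoMetricSpace α]
    {K : Set α} (hK : IsCompact K) {δ : ℝ} (hδ : 0 < δ) :
    ∃ s : Finset α, (∀ y ∈ s, y ∈ K) ∧ ∀ x ∈ K, ∃ y ∈ s, dist x y < δ := by
  obtain ⟨t, htK, ht, hcover⟩ := hK.finite_cover_balls hδ
  refine ⟨ht.toFinset, fun y hy => htK (ht.mem_toFinset.1 hy), fun x hx => ?_⟩
  obtain ⟨y, hy, hxy⟩ := Set.mem_iUnion₂.1 (hcover hx)
  exact ⟨y, ht.mem_toFinset.2 hy, hxy⟩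

theorem ContinuousLinearMap.nontrivial_of_norm_ne_zero {𝕜 E F : Type*}
    [NontriviallyNormedField 𝕜] [NormedAddCommGroup E] [NormedSpace 𝕜 E]
    [NormedAddCommGroup F] [NormedSpace 𝕜 F] {T : E →L[𝕜] F} (hT : ‖T‖ ≠ 0) :
    Nontrivial E ∧ Nontrivial F := by
  obtain ⟨e, he⟩ := DFunLike.ne_iff.1 (norm_ne_zero_iff.1 hT)
  exact ⟨nontrivial_of_ne e 0 (by rintro rfl; simp at he), nontrivial_of_ne _ _ he⟩

theorem norm_add_apply_le_of_opNorm_le_one {𝕜 X Y : Type*} [NontriviallyNormedField 𝕜]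
    [SeminormedAddCommGroup X] [NormedSpace 𝕜 X] [SeminormedAddCommGroup Y] [NormedSpace 𝕜 Y]
    {T : Y →L[𝕜] X} (hT : ‖T‖ ≤ 1) (u u' : X) (v v' : Y) :
    ‖u' + T v'‖ ≤ ‖u + T v‖ + ‖u - u'‖ + ‖v - v'‖ := by
  calc ‖u' + T v'‖ = ‖(u + T v) - ((u - u') + T (v - v'))‖ := by rw [map_sub]; abel_nf
    _ ≤ ‖u + T v‖ + (‖u - u'‖ + ‖T (v - v')‖) :=
      (norm_sub_le _ _).trans (by gcongr; exact norm_add_le _ _)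
    _ ≤ ‖u + T v‖ + ‖u - u'‖ + ‖v - v'‖ := by
      linarith [T.le_of_opNorm_le hT (v - v')]

section Real

variable {X Y : Type*} [NormedAddCommGroup X] [NormedSpace ℝ X]

theorem one_sub_mul_add_le_norm_smul_add_smul {u w : X} {ε a b : ℝ} (hu : ‖u‖ ≤ 1)
    (hw : ‖w‖ ≤ 1) (huw : 2 - ε ≤ ‖u + w‖) (ha : 0 ≤ a) (hb : 0 ≤ b) :
    (1 - ε) * (a + b) ≤ ‖a • u + b • w‖ := by
  obtain ⟨f, hf, hfuw⟩ := exists_dual_vector'' ℝ (u + w)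
  have hf_le (x : X) : f x ≤ ‖x‖ :=
    (Real.le_norm_self _).trans ((f.le_of_opNorm_le hf x).trans_eq (one_mul _))
  have hsum : f u + f w = ‖u + w‖ := by rw [← map_add]; exact hfuw
  have hfu : 1 - ε ≤ f u := by linarith [hf_le w]
  have hfw : 1 - ε ≤ f w := by linarith [hf_le u]
  calc (1 - ε) * (a + b) ≤ a * f u + b * f w := by nlinarith
    _ = f (a • u + b • w) := by simp
    _ ≤ ‖a • u + b • w‖ := hf_le _

theorem Submodule.exists_eq_smul_of_norm_eq_one {Z : Submodule ℝ X} {x₀ : X} (hx₀Z : x₀ ∈ Z)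
    (hx₀ : ‖x₀‖ = 1) {z : X} (hz : z ∈ Z) : ∃ r : ℝ, 0 ≤ r ∧ ∃ u ∈ Z, ‖u‖ = 1 ∧ z = r • u := by
  rcases eq_or_ne z 0 with rfl | hz₀
  · exact ⟨0, le_rfl, x₀, hx₀Z, hx₀, (zero_smul ℝ x₀).symm⟩
  · exact ⟨‖z‖, norm_nonneg z, ‖z‖⁻¹ • z, Z.smul_mem _ hz, norm_smul_inv_norm hz₀,
      (smul_inv_smul₀ (norm_ne_zero_iff.2 hz₀) z).symm⟩

variable [NormedAddCommGroup Y] [NormedSpace ℝ Y]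

theorem exists_forall_finset_of_forall_fin
    (h : ∀ (n m : ℕ) (z : Fin n → X) (y : Fin m → Y),
      (∀ i, ‖z i‖ = 1) → (∀ j, ‖y j‖ = 1) → ∀ ε : ℝ, 0 < ε →
        ∃ T : Y →L[ℝ] X, ‖T‖ = 1 ∧ ∀ i j, 2 - ε < ‖z i + T (y j)‖)
    (s : Finset X) (t : Finset Y) (hs : ∀ z ∈ s, ‖z‖ = 1) (ht : ∀ y ∈ t, ‖y‖ = 1)
    {ε : ℝ} (hε : 0 < ε) :
    ∃ T : Y →L[ℝ] X, ‖T‖ = 1 ∧ ∀ z ∈ s, ∀ y ∈ t, 2 - ε < ‖z + T y‖ := by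
  obtain ⟨T, hT1, hT⟩ := h s.card t.card (fun i => s.equivFin.symm i) (fun j => t.equivFin.symm j)
    (fun i => hs _ (Subtype.prop _)) (fun j => ht _ (Subtype.prop _)) ε hε
  refine ⟨T, hT1, fun z hz y hy => ?_⟩
  simpa using hT (s.equivFin ⟨z, hz⟩) (t.equivFin ⟨y, hy⟩)

theorem exists_forall_norm_eq_one_of_forall_fin
    (h : ∀ (n m : ℕ) (z : Fin n → X) (y : Fin m → Y),
      (∀ i, ‖z i‖ = 1) → (∀ j, ‖y j‖ = 1) → ∀ ε : ℝ, 0 < ε →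
        ∃ T : Y →L[ℝ] X, ‖T‖ = 1 ∧ ∀ i j, 2 - ε < ‖z i + T (y j)‖)
    [FiniteDimensional ℝ Y] (Z : Submodule ℝ X) [FiniteDimensional ℝ Z] {ε : ℝ} (hε : 0 < ε) :
    ∃ T : Y →L[ℝ] X, ‖T‖ = 1 ∧
      ∀ u ∈ Z, ‖u‖ = 1 → ∀ v : Y, ‖v‖ = 1 → 2 - ε < ‖u + T v‖ := by
  have hKZ : IsCompact {u : X | ‖u‖ = 1 ∧ u ∈ Z} := by
    convert (isCompact_sphere (0 : Z) 1).image continuous_subtype_val using 1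
    ext u
    simp
  obtain ⟨s, hsK, hs⟩ := hKZ.exists_finset_forall_exists_dist_lt (by positivity : 0 < ε / 4)
  obtain ⟨t, htK, ht⟩ :=
    (isCompact_sphere (0 : Y) 1).exists_finset_forall_exists_dist_lt (by positivity : 0 < ε / 4)
  obtain ⟨T, hT1, hT⟩ := exists_forall_finset_of_forall_fin h s t (fun u hu => (hsK u hu).1)
    (fun v hv => by simpa using htK v hv) (by positivity : 0 < ε / 2)
  refine ⟨T, hT1, fun u hu hu1 v hv1 => ?_⟩
  obtain ⟨u', hu's, huu'⟩ := hs u ⟨hu1, hu⟩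
  obtain ⟨v', hv't, hvv'⟩ := ht v (by simpa using hv1)
  rw [dist_eq_norm] at huu' hvv'
  linarith [hT u' hu's v' hv't, norm_add_apply_le_of_opNorm_le_one hT1.le u u' v v']

end Real

theorem stmt17_general {X Y : Type*} [NormedAddCommGroup X] [NormedSpace ℝ X]
    [NormedAddCommGroup Y] [NormedSpace ℝ Y] [FiniteDimensional ℝ Y] :
    (∀ Z : Submodule ℝ X, FiniteDimensional ℝ Z → ∀ ε : ℝ, 0 < ε →
      ∃ T : Y →L[ℝ] X, ‖T‖ = 1 ∧
        ∀ z ∈ Z, ∀ y : Y, (1 - ε) * (‖z‖ + ‖y‖) ≤ ‖z + T y‖) ↔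
    (∀ (n m : ℕ) (z : Fin n → X) (y : Fin m → Y),
      (∀ i, ‖z i‖ = 1) → (∀ j, ‖y j‖ = 1) → ∀ ε : ℝ, 0 < ε →
        ∃ T : Y →L[ℝ] X, ‖T‖ = 1 ∧ ∀ i j, 2 - ε < ‖z i + T (y j)‖) := by
  constructor
  · intro h n m z y hz hy ε hε
    obtain ⟨T, hT1, hT⟩ :=
      h _ (FiniteDimensional.span_of_finite ℝ (Set.finite_range z)) (ε / 4) (by positivity)
    refine ⟨T, hT1, fun i j => ?_⟩
    have := hT (z i) (Submodule.subset_span ⟨i, rfl⟩) (y j)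
    rw [hz i, hy j] at this
    linarith
  · intro h Z hZ ε hε
    -- (2) for empty families already provides a norm-one operator, so `X` and `Y` are nontrivial.
    obtain ⟨T₀, hT₀, -⟩ := h 0 0 Fin.elim0 Fin.elim0 (fun i => i.elim0) (fun j => j.elim0) 1 one_pos
    obtain ⟨_, _⟩ := T₀.nontrivial_of_norm_ne_zero (by simp [hT₀])
    obtain ⟨x₀, hx₀⟩ := exists_norm_eq X zero_le_one
    obtain ⟨y₀, hy₀⟩ := exists_norm_eq Y zero_le_one
    let Z' := Z ⊔ ℝ ∙ x₀
    obtain ⟨T, hT1, hT⟩ := exists_forall_norm_eq_one_of_forall_fin h Z' hε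
    refine ⟨T, hT1, fun z hz y => ?_⟩
    obtain ⟨r, hr, u, huZ', hu, rfl⟩ := Z'.exists_eq_smul_of_norm_eq_one
      (Submodule.mem_sup_right (Submodule.mem_span_singleton_self x₀)) hx₀
      (Submodule.mem_sup_left hz)
    obtain ⟨s, hs, v, -, hv, rfl⟩ :=
      (⊤ : Submodule ℝ Y).exists_eq_smul_of_norm_eq_one (z := y) trivial hy₀ trivial
    have hTv : ‖T v‖ ≤ 1 := by simpa [hv] using T.le_of_opNorm_le hT1.le v
    simpa [norm_smul, hu, hv, abs_of_nonneg hr, abs_of_nonneg hs] using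
      one_sub_mul_add_le_norm_smul_add_smul hu.le hTv (hT u huZ' hu v hv).le hr hs

/-- For `Y` finite-dimensional, the subspace formulation (1) and the finite-set
formulation (2) of "copies of `Y` can be placed `ℓ₁`-orthogonally to any
finite-dimensional part of `X`" are equivalent. -/
theorem stmt17 {X Y : Type*} [NormedAddCommGroup X] [NormedSpace ℝ X] [CompleteSpace X]
    [NormedAddCommGroup Y] [NormedSpace ℝ Y] [FiniteDimensional ℝ Y] :
    (∀ Z : Submodule ℝ X, FiniteDimensional ℝ Z → ∀ ε : ℝ, 0 < ε →
      ∃ T : Y →L[ℝ] X, ‖T‖ = 1 ∧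
        ∀ z ∈ Z, ∀ y : Y, (1 - ε) * (‖z‖ + ‖y‖) ≤ ‖z + T y‖) ↔
    (∀ (n m : ℕ) (z : Fin n → X) (y : Fin m → Y),
      (∀ i, ‖z i‖ = 1) → (∀ j, ‖y j‖ = 1) → ∀ ε : ℝ, 0 < ε →
        ∃ T : Y →L[ℝ] X, ‖T‖ = 1 ∧ ∀ i j, 2 - ε < ‖z i + T (y j)‖) :=
  stmt17_general
end

section
/- Let X be a Banach space with a nonzero L-orthogonal element u ∈ X**, i.e. ‖x + u‖ = ‖x‖ + ‖u‖ for all x ∈ X. Then the norm of X is octahedral. -/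
open NormedSpace

/-! Normalise `u`. L-orthogonality says that every `c ∈ X` is almost normed, together with `u`,
by a single functional `g` of norm at most one. Finitely many such functionals almost norm a
finite-dimensional subspace `E`, and by Helly's lemma some `y` in the unit ball of `X` takes almost
the same values on them as `u`. For `x ∈ E` and `l ≥ 0` the functional `g` almost norming `x` then
gives `‖x + l • y‖ ≥ g x + l * g y ≈ ‖x‖ + l`; negative `l` follow by symmetry, and normalising `y`
only increases the left-hand side. -/

open Metric Set

section Seminormed

variable {X : Type*} [SeminormedAddCommGroup X] [NormedSpace ℝ X]

theorem StrongDual.apply_le_of_norm_le_one {g : StrongDual ℝ X} (hg : ‖g‖ ≤ 1) (x : X) :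
    g x ≤ ‖x‖ :=
  (Real.le_norm_self _).trans ((g.le_of_opNorm_le hg x).trans_eq (one_mul _))

theorem StrongDual.norm_le_of_forall_norm_le_one_apply_lt {g : StrongDual ℝ X} {r : ℝ}
    (hg : ∀ y : X, ‖y‖ ≤ 1 → g y < r) : ‖g‖ ≤ r := by
  have hr : 0 ≤ r := by simpa using (hg 0 (by simp)).le
  refine g.opNorm_le_of_unit_norm hr fun y hy => ?_
  have h₁ := hg y hy.le
  have h₂ := hg (-y) (by rw [norm_neg, hy])
  rw [map_neg] at h₂
  rw [Real.norm_eq_abs, abs_le]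
  constructor <;> linarith

/-- Helly's lemma, the finite-dimensional form of Goldstine's theorem. -/
theorem exists_norm_le_one_abs_apply_sub_le {ι : Type*} [Finite ι] (f : ι → StrongDual ℝ X)
    (w : StrongDual ℝ (StrongDual ℝ X)) (hw : ‖w‖ ≤ 1) {δ : ℝ} (hδ : 0 < δ) :
    ∃ y : X, ‖y‖ ≤ 1 ∧ ∀ i, |f i y - w (f i)| ≤ δ := by
  classical
  cases nonempty_fintype ι
  let T : X →L[ℝ] ι → ℝ := ContinuousLinearMap.pi f
  let c : ι → ℝ := fun i => w (f i)
  have hwT : ∀ φ : StrongDual ℝ (ι → ℝ), w (φ.comp T) = φ c := by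
    intro φ
    have : φ.comp T = ∑ i, φ (fun j => if i = j then 1 else 0) • f i := by
      ext y
      simpa [T, mul_comm] using φ.toLinearMap.pi_apply_eq_sum_univ (fun i => f i y)
    rw [this, map_sum]
    simpa [c, mul_comm] using (φ.toLinearMap.pi_apply_eq_sum_univ c).symm
  have hc : c ∈ closure (T '' closedBall 0 1) := by
    by_contra hc
    obtain ⟨φ, r, hφ, hr⟩ := geometric_hahn_banach_closed_point
      ((convex_closedBall _ _).linear_image T.toLinearMap).closure isClosed_closure hc
    have hφT : ‖φ.comp T‖ ≤ r := StrongDual.norm_le_of_forall_norm_le_one_apply_lt fun y hy =>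
      hφ _ (subset_closure ⟨y, mem_closedBall_zero_iff.2 hy, rfl⟩)
    have := (Real.le_norm_self _).trans (w.le_of_opNorm_le hw (φ.comp T))
    rw [hwT] at this
    linarith
  obtain ⟨_, ⟨y, hy, rfl⟩, hyc⟩ := Metric.mem_closure_iff.1 hc δ hδ
  refine ⟨y, mem_closedBall_zero_iff.1 hy, fun i => ?_⟩
  rw [← Real.dist_eq]
  exact (dist_le_pi_dist (T y) c i).trans ((dist_comm _ _).trans_le hyc.le)

def IsLOrthogonal {F : Type*} [SeminormedAddCommGroup F] [NormedSpace ℝ F] (J : X →L[ℝ] F)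
    (u : F) : Prop :=
  ∀ x : X, ‖J x + u‖ = ‖x‖ + ‖u‖

theorem IsLOrthogonal.smul {F : Type*} [SeminormedAddCommGroup F] [NormedSpace ℝ F]
    {J : X →L[ℝ] F} {u : F} (hu : IsLOrthogonal J u) {a : ℝ} (ha : 0 < a) :
    IsLOrthogonal J (a • u) := by
  intro x
  have : J x + a • u = a • (J (a⁻¹ • x) + u) := by
    rw [smul_add, map_smul, smul_smul, mul_inv_cancel₀ ha.ne', one_smul]
  rw [this, norm_smul, hu, norm_smul, norm_smul, norm_inv, Real.norm_of_nonneg ha.le]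
  field_simp

end Seminormed

section Normed

variable {X : Type*} [NormedAddCommGroup X] [NormedSpace ℝ X]

theorem StrongDual.exists_norm_le_one_sub_lt_apply (w : StrongDual ℝ X) {δ : ℝ} (hδ : 0 < δ) :
    ∃ g : X, ‖g‖ ≤ 1 ∧ ‖w‖ - δ < w g := by
  obtain ⟨g, hg1, hg⟩ := w.exists_lt_apply_of_lt_opNorm (sub_lt_self _ hδ)
  rcases le_or_gt 0 (w g) with h | h
  · exact ⟨g, hg1.le, by rwa [Real.norm_eq_abs, abs_of_nonneg h] at hg⟩
  · exact ⟨-g, by rw [norm_neg]; exact hg1.le, by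
      rwa [map_neg, ← abs_of_neg h, ← Real.norm_eq_abs]⟩

theorem IsLOrthogonal.exists_almost_norming {u : StrongDual ℝ (StrongDual ℝ X)}
    (hu : IsLOrthogonal (inclusionInDoubleDual ℝ X) u) (x : X) {δ : ℝ} (hδ : 0 < δ) :
    ∃ g : StrongDual ℝ X, ‖g‖ ≤ 1 ∧ ‖x‖ - δ < g x ∧ ‖u‖ - δ < u g := by
  obtain ⟨g, hg1, hg⟩ := (inclusionInDoubleDual ℝ X x + u).exists_norm_le_one_sub_lt_apply hδ
  rw [hu x] at hg
  have hgx := StrongDual.apply_le_of_norm_le_one hg1 x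
  have hug := (Real.le_norm_self _).trans
    ((u.le_opNorm g).trans (mul_le_of_le_one_right (norm_nonneg u) hg1))
  simp only [add_apply, dual_def] at hg
  exact ⟨g, hg1, by linarith, by linarith⟩

theorem Submodule.exists_finite_almost_norming (E : Submodule ℝ X) [FiniteDimensional ℝ E]
    (g : X → StrongDual ℝ X) (hg1 : ∀ c, ‖g c‖ ≤ 1) {δ : ℝ} (hg : ∀ c, ‖c‖ - δ < g c c) :
    ∃ t : Set X, t.Finite ∧ ∀ x ∈ E, ∃ c ∈ t, (1 - 2 * δ) * ‖x‖ ≤ g c x := by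
  have hδ : 0 < δ := by simpa using hg 0
  have hK : IsCompact (((↑) : E → X) '' sphere 0 1) :=
    (isCompact_sphere 0 1).image continuous_subtype_val
  obtain ⟨t, htK, htfin, hcover⟩ := finite_cover_balls_of_compact hK hδ
  refine ⟨insert 0 t, htfin.insert 0, fun x hx => ?_⟩
  rcases eq_or_ne x 0 with rfl | hx0
  · exact ⟨0, mem_insert _ _, by simp⟩
  have hxn : 0 < ‖x‖ := norm_pos_iff.2 hx0
  obtain ⟨c, hct, hxc⟩ := mem_iUnion₂.1 <| hcover
    ⟨⟨‖x‖⁻¹ • x, E.smul_mem _ hx⟩, by simp [norm_smul, hxn.ne'], rfl⟩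
  have hc1 : ‖c‖ = 1 := by
    obtain ⟨e, he, rfl⟩ := htK hct
    simpa using he
  have hgxc : 1 - 2 * δ ≤ g c (‖x‖⁻¹ • x) := by
    have h₁ := hg c
    have h₂ := StrongDual.apply_le_of_norm_le_one (hg1 c) (c - ‖x‖⁻¹ • x)
    rw [map_sub, norm_sub_rev] at h₂
    linarith [mem_ball_iff_norm.1 hxc]
  refine ⟨c, mem_insert_of_mem _ hct, ?_⟩
  calc (1 - 2 * δ) * ‖x‖ ≤ g c (‖x‖⁻¹ • x) * ‖x‖ := by gcongr
    _ = g c x := by rw [map_smul, smul_eq_mul]; field_simp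

theorem IsLOrthogonal.exists_forall_nonneg_le_norm_add_smul {v : StrongDual ℝ (StrongDual ℝ X)}
    (hv : IsLOrthogonal (inclusionInDoubleDual ℝ X) v) (hv1 : ‖v‖ = 1) (E : Submodule ℝ X)
    [FiniteDimensional ℝ E] {ε : ℝ} (hε : 0 < ε) :
    ∃ y : X, ‖y‖ ≤ 1 ∧ ∀ x ∈ E, ∀ l : ℝ, 0 ≤ l → (1 - ε) * (‖x‖ + l) ≤ ‖x + l • y‖ := by
  choose g hg1 hgx hgv using fun x : X => hv.exists_almost_norming x (half_pos hε)
  obtain ⟨t, htfin, ht⟩ := E.exists_finite_almost_norming g hg1 hgx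
  have := htfin.to_subtype
  obtain ⟨y, hy1, hy⟩ :=
    exists_norm_le_one_abs_apply_sub_le (fun c : t => g c) v hv1.le (half_pos hε)
  refine ⟨y, hy1, fun x hx l hl => ?_⟩
  obtain ⟨c, hct, hcx⟩ := ht x hx
  have hcy : 1 - ε ≤ g c y := by
    have := (abs_le.1 (hy ⟨c, hct⟩)).1
    linarith [hgv c]
  calc (1 - ε) * (‖x‖ + l) = (1 - 2 * (ε / 2)) * ‖x‖ + l * (1 - ε) := by ring
    _ ≤ g c x + l * g c y := add_le_add hcx (mul_le_mul_of_nonneg_left hcy hl)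
    _ = g c (x + l • y) := by simp
    _ ≤ ‖x + l • y‖ := StrongDual.apply_le_of_norm_le_one (hg1 c) _

theorem octahedral_of_forall_nonneg_le_norm_add_smul
    (h : ∀ E : Submodule ℝ X, FiniteDimensional ℝ E → ∀ ε : ℝ, 0 < ε → ∃ y : X, ‖y‖ ≤ 1 ∧
      ∀ x ∈ E, ∀ l : ℝ, 0 ≤ l → (1 - ε) * (‖x‖ + l) ≤ ‖x + l • y‖) :
    Octahedral X := by
  intro E hE ε hε
  -- capping `ε` keeps `‖y‖ ≥ 1 / 2`, so that `y` can be normalised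
  set ε' := min ε (1 / 2)
  obtain ⟨y, hy1, hy⟩ := h E hE ε' (by positivity)
  have hε'ε : ε' ≤ ε := min_le_left _ _
  have hε'1 : ε' ≤ 1 / 2 := min_le_right _ _
  have hyn : 1 / 2 ≤ ‖y‖ := by
    have := hy 0 E.zero_mem 1 zero_le_one
    simp only [norm_zero, zero_add, one_smul, mul_one] at this
    linarith
  have hy0 : 0 < ‖y‖ := by linarith
  have key : ∀ x ∈ E, ∀ l : ℝ, 0 ≤ l → (1 - ε) * (‖x‖ + l) ≤ ‖x + l • ‖y‖⁻¹ • y‖ := by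
    intro x hx l hl
    rw [smul_smul]
    have hl' : l ≤ l * ‖y‖⁻¹ := le_mul_of_one_le_right hl (one_le_inv₀ hy0 |>.2 hy1)
    calc (1 - ε) * (‖x‖ + l) ≤ (1 - ε') * (‖x‖ + l * ‖y‖⁻¹) :=
          mul_le_mul (by linarith) (by linarith) (by positivity) (by linarith)
      _ ≤ _ := hy x hx _ (by positivity)
  refine ⟨‖y‖⁻¹ • y, norm_smul_inv_norm (norm_pos_iff.1 hy0), fun x hx l => ?_⟩
  rcases le_or_gt 0 l with hl | hl
  · rw [abs_of_nonneg hl]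
    exact key x hx l hl
  · have := key (-x) (E.neg_mem hx) (-l) (by linarith)
    rwa [norm_neg, neg_smul, ← neg_add, norm_neg, ← abs_of_neg hl] at this

end Normed

theorem stmt18_general {X : Type*} [NormedAddCommGroup X] [NormedSpace ℝ X]
    (u : StrongDual ℝ (StrongDual ℝ X)) (hu : u ≠ 0)
    (hL : ∀ x : X, ‖inclusionInDoubleDual ℝ X x + u‖ = ‖x‖ + ‖u‖) :
    Octahedral X := by
  have hL' : IsLOrthogonal (inclusionInDoubleDual ℝ X) u := hL
  have hv1 : ‖‖u‖⁻¹ • u‖ = 1 := by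
    simpa using norm_smul_inv_norm (𝕜 := ℝ) (E := StrongDual ℝ (StrongDual ℝ X)) hu
  exact octahedral_of_forall_nonneg_le_norm_add_smul fun E _ ε hε =>
    (hL'.smul (by positivity)).exists_forall_nonneg_le_norm_add_smul hv1 E hε

/-- If `X` admits a nonzero L-orthogonal element `u ∈ X**`, i.e.
`‖x + u‖ = ‖x‖ + ‖u‖` for all `x ∈ X`, then the norm of `X` is octahedral. -/
theorem stmt18 {X : Type*} [NormedAddCommGroup X] [NormedSpace ℝ X] [CompleteSpace X]
    (u : StrongDual ℝ (StrongDual ℝ X)) (hu : u ≠ 0)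
    (hL : ∀ x : X, ‖inclusionInDoubleDual ℝ X x + u‖ = ‖x‖ + ‖u‖) :
    Octahedral X :=
  stmt18_general u hu hL
end
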